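/- Let λ₁, λ₂, λ₃ > 0 with λ₁ + λ₂ + λ₃ = 1 and F₁, F₂, F₃ ∈ ℝ with |F_i| ≤ λ_i for i = 1,2,3, and define σ_i, w_i as above; set Δ = min{w₁σ₁ − F₁², w₂σ₂ − F₂², w₃σ₃ − F₃²}. If 3λ_i² + λ_i(λ_j + λ_k) − λ_j λ_k > 0 for every choice of mutually different indices i, j, k ∈ {1,2,3}, and Δ ≥ 0, then for each i = 1,2,3: 0 ≤ σ_i ≤ w_i and F_i² ≤ σ_i w_i. -/
import Mathlib


noncomputable section

/-- `q(x,y;F_x,F_y) = (x − F_x²/x)(y − F_y²/y)`. -/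
def qfun (x y Fx Fy : ℝ) : ℝ := (x - Fx ^ 2 / x) * (y - Fy ^ 2 / y)

/-- `r(x,y;F_x,F_y) = −(1 − F_x²/x − F_y²/y)`. -/
def rfun (x y Fx Fy : ℝ) : ℝ := -(1 - Fx ^ 2 / x - Fy ^ 2 / y)

/-- `g(x,y;F_x,F_y) = 2 q (x + y − 1 − r) / (3(x+y)²)`. -/
def gfun (x y Fx Fy : ℝ) : ℝ :=
  2 * qfun x y Fx Fy * (x + y - 1 - rfun x y Fx Fy) / (3 * (x + y) ^ 2)

/-- `σ₁ = λ₁ − g(λ₁,λ₂;F₁,F₂) − g(λ₁,λ₃;F₁,F₃)`. -/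
def sig1 (l1 l2 l3 F1 F2 F3 : ℝ) : ℝ := l1 - gfun l1 l2 F1 F2 - gfun l1 l3 F1 F3

/-- `σ₂ = λ₂ − g(λ₂,λ₁;F₂,F₁) − g(λ₂,λ₃;F₂,F₃)`. -/
def sig2 (l1 l2 l3 F1 F2 F3 : ℝ) : ℝ := l2 - gfun l2 l1 F2 F1 - gfun l2 l3 F2 F3

/-- `σ₃ = λ₃ − g(λ₃,λ₁;F₃,F₁) − g(λ₃,λ₂;F₃,F₂)`. -/
def sig3 (l1 l2 l3 F1 F2 F3 : ℝ) : ℝ := l3 - gfun l3 l1 F3 F1 - gfun l3 l2 F3 F2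

/-- `w₁ = σ₁ + 2g(λ₂,λ₃;F₂,F₃)`. -/
def w1 (l1 l2 l3 F1 F2 F3 : ℝ) : ℝ := sig1 l1 l2 l3 F1 F2 F3 + 2 * gfun l2 l3 F2 F3

/-- `w₂ = σ₂ + 2g(λ₁,λ₃;F₁,F₃)`. -/
def w2 (l1 l2 l3 F1 F2 F3 : ℝ) : ℝ := sig2 l1 l2 l3 F1 F2 F3 + 2 * gfun l1 l3 F1 F3

/-- `w₃ = σ₃ + 2g(λ₁,λ₂;F₁,F₂)`. -/
def w3 (l1 l2 l3 F1 F2 F3 : ℝ) : ℝ := sig3 l1 l2 l3 F1 F2 F3 + 2 * gfun l1 l2 F1 F2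

lemma aux_nonneg (x Fx : ℝ) (hx : 0 < x) (h : |Fx| ≤ x) : 0 ≤ x - Fx ^ 2 / x := by
  obtain ⟨h1, h2⟩ := abs_le.mp h
  rw [sub_nonneg, div_le_iff₀ hx]
  nlinarith

lemma aux_le (x Fx : ℝ) (hx : 0 < x) : x - Fx ^ 2 / x ≤ x := by
  have : 0 ≤ Fx ^ 2 / x := by positivity
  linarith

lemma g_eq (x y Fx Fy : ℝ) :
    gfun x y Fx Fy =
      2 * (x - Fx ^ 2 / x) * (y - Fy ^ 2 / y) * ((x - Fx ^ 2 / x) + (y - Fy ^ 2 / y)) /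
        (3 * (x + y) ^ 2) := by
  unfold gfun qfun rfun; ring_nf

lemma g_nonneg (x y Fx Fy : ℝ) (hx : 0 < x) (hy : 0 < y)
    (hFx : |Fx| ≤ x) (hFy : |Fy| ≤ y) : 0 ≤ gfun x y Fx Fy := by
  have ha := aux_nonneg x Fx hx hFx
  have hb := aux_nonneg y Fy hy hFy
  rw [g_eq]
  have hden : (0:ℝ) < 3 * (x + y) ^ 2 := by positivity
  apply div_nonneg _ hden.le
  have : 0 ≤ 2 * (x - Fx ^ 2 / x) * (y - Fy ^ 2 / y) := by positivity
  nlinarith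

lemma g_le (x y Fx Fy : ℝ) (hx : 0 < x) (hy : 0 < y)
    (hFx : |Fx| ≤ x) (hFy : |Fy| ≤ y) :
    gfun x y Fx Fy ≤ 2 * x * y / (3 * (x + y)) := by
  have ha := aux_nonneg x Fx hx hFx
  have hb := aux_nonneg y Fy hy hFy
  have hax := aux_le x Fx hx
  have hby := aux_le y Fy hy
  rw [g_eq, div_le_div_iff₀ (by positivity) (by positivity)]
  set a := x - Fx ^ 2 / x with ha'
  set b := y - Fy ^ 2 / y with hb'
  have hxy : 0 < x + y := by linarith
  have key : a * b * (a + b) ≤ x * y * (x + y) := by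
    nlinarith [mul_nonneg (mul_nonneg (sub_nonneg.mpr hax) hy.le) hxy.le,
      mul_nonneg (mul_nonneg ha (sub_nonneg.mpr hby)) hxy.le,
      mul_nonneg (mul_nonneg ha hb) (sub_nonneg.mpr hax),
      mul_nonneg (mul_nonneg ha hb) (sub_nonneg.mpr hby)]
  nlinarith [mul_le_mul_of_nonneg_right key hxy.le, sq_nonneg (x + y)]

lemma key_pos (l1 l2 l3 : ℝ) (h1 : 0 < l1) (h2 : 0 < l2) (h3 : 0 < l3)
    (hc : 0 < 3 * l1 ^ 2 + l1 * (l2 + l3) - l2 * l3) :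
    2 * l1 * l2 / (3 * (l1 + l2)) + 2 * l1 * l3 / (3 * (l1 + l3)) < l1 := by
  have h12 : (0:ℝ) < 3 * (l1 + l2) := by linarith
  have h13 : (0:ℝ) < 3 * (l1 + l3) := by linarith
  rw [div_add_div _ _ h12.ne' h13.ne', div_lt_iff₀ (by positivity)]
  nlinarith [mul_pos h1 hc]

/-- Theorem 4.2 (sufficient condition for a nonnegative ansatz): if
`|F_i| ≤ λ_i`, the three quadratic conditions `3λ_i² + λ_i(λ_j+λ_k) − λ_jλ_k > 0`
hold, and the discriminant `Δ = min_i (w_iσ_i − F_i²)` is nonnegative, then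
`0 ≤ σ_i ≤ w_i` and `F_i² ≤ σ_i w_i` for each `i`. -/
theorem nonnegative_ansatz_conditions (l1 l2 l3 F1 F2 F3 : ℝ)
    (h1 : 0 < l1) (h2 : 0 < l2) (h3 : 0 < l3) (hsum : l1 + l2 + l3 = 1)
    (hF1 : |F1| ≤ l1) (hF2 : |F2| ≤ l2) (hF3 : |F3| ≤ l3)
    (hc1 : 0 < 3 * l1 ^ 2 + l1 * (l2 + l3) - l2 * l3)
    (hc2 : 0 < 3 * l2 ^ 2 + l2 * (l1 + l3) - l1 * l3)
    (hc3 : 0 < 3 * l3 ^ 2 + l3 * (l1 + l2) - l1 * l2)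
    (hΔ : 0 ≤ min (min (w1 l1 l2 l3 F1 F2 F3 * sig1 l1 l2 l3 F1 F2 F3 - F1 ^ 2)
                       (w2 l1 l2 l3 F1 F2 F3 * sig2 l1 l2 l3 F1 F2 F3 - F2 ^ 2))
                  (w3 l1 l2 l3 F1 F2 F3 * sig3 l1 l2 l3 F1 F2 F3 - F3 ^ 2)) :
    (0 ≤ sig1 l1 l2 l3 F1 F2 F3 ∧ sig1 l1 l2 l3 F1 F2 F3 ≤ w1 l1 l2 l3 F1 F2 F3 ∧
      F1 ^ 2 ≤ sig1 l1 l2 l3 F1 F2 F3 * w1 l1 l2 l3 F1 F2 F3) ∧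
    (0 ≤ sig2 l1 l2 l3 F1 F2 F3 ∧ sig2 l1 l2 l3 F1 F2 F3 ≤ w2 l1 l2 l3 F1 F2 F3 ∧
      F2 ^ 2 ≤ sig2 l1 l2 l3 F1 F2 F3 * w2 l1 l2 l3 F1 F2 F3) ∧
    (0 ≤ sig3 l1 l2 l3 F1 F2 F3 ∧ sig3 l1 l2 l3 F1 F2 F3 ≤ w3 l1 l2 l3 F1 F2 F3 ∧
      F3 ^ 2 ≤ sig3 l1 l2 l3 F1 F2 F3 * w3 l1 l2 l3 F1 F2 F3) := by
  have hd1 : 0 ≤ w1 l1 l2 l3 F1 F2 F3 * sig1 l1 l2 l3 F1 F2 F3 - F1 ^ 2 :=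
    le_trans hΔ (le_trans (min_le_left _ _) (min_le_left _ _))
  have hd2 : 0 ≤ w2 l1 l2 l3 F1 F2 F3 * sig2 l1 l2 l3 F1 F2 F3 - F2 ^ 2 :=
    le_trans hΔ (le_trans (min_le_left _ _) (min_le_right _ _))
  have hd3 : 0 ≤ w3 l1 l2 l3 F1 F2 F3 * sig3 l1 l2 l3 F1 F2 F3 - F3 ^ 2 :=
    le_trans hΔ (min_le_right _ _)
  have g12 := g_le l1 l2 F1 F2 h1 h2 hF1 hF2
  have g13 := g_le l1 l3 F1 F3 h1 h3 hF1 hF3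
  have g21 := g_le l2 l1 F2 F1 h2 h1 hF2 hF1
  have g23 := g_le l2 l3 F2 F3 h2 h3 hF2 hF3
  have g31 := g_le l3 l1 F3 F1 h3 h1 hF3 hF1
  have g32 := g_le l3 l2 F3 F2 h3 h2 hF3 hF2
  have gn12 := g_nonneg l1 l2 F1 F2 h1 h2 hF1 hF2
  have gn13 := g_nonneg l1 l3 F1 F3 h1 h3 hF1 hF3
  have gn23 := g_nonneg l2 l3 F2 F3 h2 h3 hF2 hF3
  have k1 := key_pos l1 l2 l3 h1 h2 h3 hc1
  have k2 := key_pos l2 l1 l3 h2 h1 h3 (by nlinarith)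
  have k3 := key_pos l3 l1 l2 h3 h1 h2 (by nlinarith)
  have hs1 : 0 ≤ sig1 l1 l2 l3 F1 F2 F3 := by unfold sig1; linarith
  have hs2 : 0 ≤ sig2 l1 l2 l3 F1 F2 F3 := by unfold sig2; linarith
  have hs3 : 0 ≤ sig3 l1 l2 l3 F1 F2 F3 := by unfold sig3; linarith
  have hw1 : sig1 l1 l2 l3 F1 F2 F3 ≤ w1 l1 l2 l3 F1 F2 F3 := by unfold w1; linarith
  have hw2 : sig2 l1 l2 l3 F1 F2 F3 ≤ w2 l1 l2 l3 F1 F2 F3 := by unfold w2; linarith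
  have hw3 : sig3 l1 l2 l3 F1 F2 F3 ≤ w3 l1 l2 l3 F1 F2 F3 := by unfold w3; linarith
  exact ⟨⟨hs1, hw1, by linarith [mul_comm (w1 l1 l2 l3 F1 F2 F3) (sig1 l1 l2 l3 F1 F2 F3)]⟩,
    ⟨hs2, hw2, by linarith [mul_comm (w2 l1 l2 l3 F1 F2 F3) (sig2 l1 l2 l3 F1 F2 F3)]⟩,
    ⟨hs3, hw3, by linarith [mul_comm (w3 l1 l2 l3 F1 F2 F3) (sig3 l1 l2 l3 F1 F2 F3)]⟩⟩

end
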